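/- For m, n ≥ 1 and 0 ≤ r ≤ m + n − 1, the generalized Dilcher identity holds: ∑_{k=1}^{n} (-1)^{k-1} [n choose k]_q q^{k(k-1)/2 + k(m−r)} / (1 − q^k)^m = ∑_{j=0}^{m} C(r, m−j) · h_j, where h_j = ∑_{1 ≤ k_1 ≤ ⋯ ≤ k_j ≤ n} q^{k_1+⋯+k_j} / ((1−q^{k_1})⋯(1−q^{k_j})) (with h_0 = 1), as rational functions in q. -/

import Mathlib

/-- The q-Pochhammer symbol `(a;q)_n = ∏_{j=0}^{n-1} (1 - a q^j)`. -/
noncomputable def qPoch (a q : ℂ) (n : ℕ) : ℂ := ∏ j ∈ Finset.range n, (1 - a * q ^ j)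

/-- The Gaussian binomial coefficient `[n choose k]_q`. -/
noncomputable def qBinom (q : ℂ) (n k : ℕ) : ℂ :=
  qPoch q q n / (qPoch q q k * qPoch q q (n - k))

/-- The complete homogeneous symmetric function `h_j` in `q^i/(1-q^i)`, `i = 1,…,n`. -/
noncomputable def hSym (q : ℂ) (n j : ℕ) : ℂ :=
  ∑ s ∈ (Finset.Icc 1 n).sym j,
    (Multiset.map (fun i => q ^ i / (1 - q ^ i)) (s : Multiset ℕ)).prod

/-!
Write `S_m(x) = ∑_{k=1}^n (-1)^(k-1) [n k]_q q^(k choose 2) x^k / (1 - q^k)^m`, so that the left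
side is `S_m(q^(m-r))`. For `m = 0` the q-binomial theorem gives `S_0(x) = 1 - (x;q)_n`, which is
`1` at `x = q^(-r)` with `r < n`. Since `x^k (1 - q^k) = x^k - (q x)^k`, we have
`S_{m+1}(x) = S_{m+1}(q x) + S_m(x)`: the left side obeys Pascal's rule in `(m, r)`, and so does the
right side. This reduces everything to `r = 0`, i.e. `S_m(q^m) = h_m`, proved by induction on `m`:
sorting the monomials of `h_{m+1}` by their largest index `l` gives
`h_{m+1}(n) = ∑_l q^l/(1-q^l) h_m(l)`, and `∑_{l=k}^n [l k]_q q^l/(1-q^l) = [n k]_q q^k/(1-q^k)`.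
-/

open Finset

section QBinomial

variable {q : ℂ}

lemma one_sub_pow_ne_zero (hq : ¬IsOfFinOrder q) {k : ℕ} (hk : k ≠ 0) : 1 - q ^ k ≠ 0 :=
  sub_ne_zero.mpr fun h => hq (isOfFinOrder_iff_pow_eq_one.mpr ⟨k, Nat.pos_of_ne_zero hk, h.symm⟩)

lemma qPoch_zero (a q : ℂ) : qPoch a q 0 = 1 :=
  prod_range_zero _

lemma qPoch_succ (a q : ℂ) (n : ℕ) : qPoch a q (n + 1) = qPoch a q n * (1 - a * q ^ n) :=
  prod_range_succ _ _

lemma qPoch_self_succ (q : ℂ) (n : ℕ) : qPoch q q (n + 1) = qPoch q q n * (1 - q ^ (n + 1)) := by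
  rw [qPoch_succ, ← pow_succ']

lemma qPoch_self_ne_zero (hq : ¬IsOfFinOrder q) (n : ℕ) : qPoch q q n ≠ 0 :=
  prod_ne_zero_iff.mpr fun j _ => by
    rw [← pow_succ']
    exact one_sub_pow_ne_zero hq j.succ_ne_zero

lemma qPoch_eq_zero {a q : ℂ} {n r : ℕ} (hr : r < n) (h : a * q ^ r = 1) : qPoch a q n = 0 :=
  prod_eq_zero (mem_range.mpr hr) (sub_eq_zero.mpr h.symm)

lemma qBinom_zero_right (hq : ¬IsOfFinOrder q) (n : ℕ) : qBinom q n 0 = 1 := by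
  rw [qBinom, Nat.sub_zero, qPoch_zero, one_mul, div_self (qPoch_self_ne_zero hq n)]

lemma qBinom_self (hq : ¬IsOfFinOrder q) (n : ℕ) : qBinom q n n = 1 := by
  rw [qBinom, Nat.sub_self, qPoch_zero, mul_one, div_self (qPoch_self_ne_zero hq n)]

lemma qBinom_succ_left_mul (hq : ¬IsOfFinOrder q) {n k : ℕ} (hk : k ≤ n) :
    qBinom q (n + 1) k * (1 - q ^ (n + 1 - k)) = qBinom q n k * (1 - q ^ (n + 1)) := by
  obtain ⟨d, rfl⟩ := Nat.exists_eq_add_of_le hk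
  rw [show k + d + 1 - k = d + 1 by omega, qBinom, qBinom, show k + d + 1 - k = d + 1 by omega,
    Nat.add_sub_cancel_left, qPoch_self_succ, qPoch_self_succ]
  have := qPoch_self_ne_zero hq k
  have := qPoch_self_ne_zero hq d
  have := one_sub_pow_ne_zero hq d.succ_ne_zero
  field_simp

lemma qBinom_succ_succ (hq : ¬IsOfFinOrder q) {n k : ℕ} (hk : k < n) :
    qBinom q (n + 1) (k + 1) = qBinom q n (k + 1) + q ^ (n - k) * qBinom q n k := by
  obtain ⟨d, rfl⟩ := Nat.exists_eq_add_of_lt hk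
  rw [qBinom, qBinom, qBinom, show k + d + 1 + 1 - (k + 1) = d + 1 by omega,
    show k + d + 1 - (k + 1) = d by omega, show k + d + 1 - k = d + 1 by omega,
    qPoch_self_succ _ (k + d + 1), qPoch_self_succ _ k, qPoch_self_succ _ d]
  have := qPoch_self_ne_zero hq k
  have := qPoch_self_ne_zero hq d
  have := one_sub_pow_ne_zero hq k.succ_ne_zero
  have := one_sub_pow_ne_zero hq d.succ_ne_zero
  field_simp
  ring

theorem sum_qBinom_mul_eq_qPoch (hq : ¬IsOfFinOrder q) (x : ℂ) (n : ℕ) :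
    ∑ k ∈ range (n + 1), (-1) ^ k * qBinom q n k * q ^ k.choose 2 * x ^ k = qPoch x q n := by
  induction n with
  | zero => simp [qBinom_zero_right hq, qPoch_zero]
  | succ n ih =>
    set t : ℕ → ℕ → ℂ := fun n k => (-1) ^ k * qBinom q n k * q ^ k.choose 2 * x ^ k
    change ∑ k ∈ range (n + 1), t n k = qPoch x q n at ih
    have t_zero (n : ℕ) : t n 0 = 1 := by simp [t, qBinom_zero_right hq]
    have t_succ_succ {k : ℕ} (hk : k < n) :
        t (n + 1) (k + 1) = t n (k + 1) - x * q ^ n * t n k := by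
      have hpow : q ^ (n - k) * q ^ k = q ^ n := by rw [← pow_add, Nat.sub_add_cancel hk.le]
      simp only [t, qBinom_succ_succ hq hk, Nat.choose_succ_succ, Nat.choose_one_right]
      linear_combination (-1) ^ (k + 1) * qBinom q n k * q ^ k.choose 2 * x ^ (k + 1) * hpow
    have t_top : t (n + 1) (n + 1) = -(x * q ^ n) * t n n := by
      simp only [t, qBinom_self hq, Nat.choose_succ_succ, Nat.choose_one_right]
      ring
    calc ∑ k ∈ range (n + 2), t (n + 1) k
        = 1 + ∑ k ∈ range n, t (n + 1) (k + 1) + t (n + 1) (n + 1) := by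
          rw [sum_range_succ, sum_range_succ', t_zero]; ring
      _ = (∑ k ∈ range n, t n (k + 1) + 1) - x * q ^ n * (∑ k ∈ range n, t n k + t n n) := by
          rw [sum_congr rfl fun k hk => t_succ_succ (mem_range.mp hk), sum_sub_distrib,
            ← mul_sum, t_top]
          ring
      _ = qPoch x q (n + 1) := by
          rw [← t_zero n, ← sum_range_succ', ← sum_range_succ, ih, qPoch_succ]
          ring

end QBinomial

section SymSum

variable {α R : Type*} [LinearOrder α] [OrderBot α]

lemma Multiset.sup_mem_of_ne_zero {s : Multiset α} (hs : s ≠ 0) : s.sup ∈ s := by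
  induction s using Multiset.induction_on with
  | empty => exact absurd rfl hs
  | cons a t ih =>
    rw [Multiset.sup_cons]
    rcases eq_or_ne t 0 with rfl | ht
    · simp
    rcases le_total t.sup a with hle | hle
    · rw [sup_eq_left.mpr hle]
      exact Multiset.mem_cons_self a t
    · rw [sup_eq_right.mpr hle]
      exact Multiset.mem_cons_of_mem (ih ht)

lemma Sym.sup_mem {n : ℕ} (s : Sym α (n + 1)) : (s : Multiset α).sup ∈ s :=
  Multiset.sup_mem_of_ne_zero (Multiset.card_pos.mp (by simp))

variable [LocallyFiniteOrder α] [CommSemiring R]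

/-- Sort the multisets of size `j + 1` by their largest element `l`. -/
lemma sum_sym_succ_Icc (f : α → R) (a b : α) (j : ℕ) :
    ∑ s ∈ (Icc a b).sym (j + 1), ((s : Multiset α).map f).prod =
      ∑ l ∈ Icc a b, f l * ∑ s ∈ (Icc a l).sym j, ((s : Multiset α).map f).prod := by
  rw [← sum_fiberwise_of_maps_to (g := fun s : Sym α (j + 1) => (s : Multiset α).sup)
    (t := Icc a b) fun s hs => mem_sym_iff.mp hs _ s.sup_mem]
  refine sum_congr rfl fun l hl => ?_
  have l_mem {s : Sym α (j + 1)} (hs : (s : Multiset α).sup = l) : l ∈ s := hs ▸ s.sup_mem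
  rw [mul_sum]
  refine sum_bij' (fun s hs => s.erase l (l_mem (mem_filter.mp hs).2)) (fun t _ => l ::ₛ t) ?_ ?_
    (fun s _ => Sym.cons_erase _) (fun t _ => Sym.erase_cons_head t l) ?_
  · intro s hs
    obtain ⟨hs_mem, hs_sup⟩ := mem_filter.mp hs
    refine mem_sym_iff.mpr fun c hc => ?_
    have hc' : c ∈ (s : Multiset α) := Multiset.mem_of_mem_erase (by rwa [← Sym.coe_erase])
    exact mem_Icc.mpr ⟨(mem_Icc.mp (mem_sym_iff.mp hs_mem c hc')).1, hs_sup ▸ Multiset.le_sup hc'⟩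
  · intro t ht
    have le_l {c : α} (hc : c ∈ t) : a ≤ c ∧ c ≤ l := mem_Icc.mp (mem_sym_iff.mp ht c hc)
    refine mem_filter.mpr ⟨mem_sym_iff.mpr fun c hc => ?_, ?_⟩
    · rcases Sym.mem_cons.mp hc with rfl | hc
      · exact hl
      · exact mem_Icc.mpr ⟨(le_l hc).1, (le_l hc).2.trans (mem_Icc.mp hl).2⟩
    · rw [Sym.coe_cons, Multiset.sup_cons, sup_eq_left]
      exact Multiset.sup_le.mpr fun c hc => (le_l hc).2
  · intro s hs
    conv_lhs =>
      rw [← Sym.cons_erase (l_mem (mem_filter.mp hs).2), Sym.coe_cons, Multiset.map_cons,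
        Multiset.prod_cons]

end SymSum

lemma hSym_zero (q : ℂ) (n : ℕ) : hSym q n 0 = 1 := by
  rw [hSym, sym_zero, sum_singleton]
  rfl

lemma hSym_succ (q : ℂ) (n j : ℕ) :
    hSym q n (j + 1) = ∑ l ∈ Icc 1 n, q ^ l / (1 - q ^ l) * hSym q l j :=
  sum_sym_succ_Icc _ 1 n j

lemma sum_range_choose_succ_mul {R : Type*} [Semiring R] (h : ℕ → R) (r m : ℕ) :
    ∑ j ∈ range (m + 2), ((r + 1).choose (m + 1 - j) : R) * h j =
      ∑ j ∈ range (m + 2), (r.choose (m + 1 - j) : R) * h j +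
        ∑ j ∈ range (m + 1), (r.choose (m - j) : R) * h j := by
  rw [sum_range_succ, sum_range_succ (n := m + 1), Nat.sub_self, Nat.choose_zero_right,
    Nat.choose_zero_right, add_right_comm, ← sum_add_distrib]
  congr 1
  refine sum_congr rfl fun j hj => ?_
  rw [show m + 1 - j = m - j + 1 by have := mem_range.mp hj; omega, Nat.choose_succ_succ']
  push_cast
  rw [add_mul, add_comm]

section Dilcher

variable {q : ℂ}

lemma sum_Icc_qBinom_mul (hq : ¬IsOfFinOrder q) {n k : ℕ} (hk : k ≠ 0) (hkn : k ≤ n) :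
    ∑ l ∈ Icc k n, qBinom q l k * (q ^ l / (1 - q ^ l)) = qBinom q n k * (q ^ k / (1 - q ^ k)) := by
  induction n, hkn using Nat.le_induction with
  | base => rw [Icc_self, sum_singleton]
  | succ n hkn ih =>
    rw [sum_Icc_succ_top (by omega), ih]
    have hrec := qBinom_succ_left_mul hq hkn
    have hpow : q ^ k * q ^ (n + 1 - k) = q ^ (n + 1) := by rw [← pow_add]; congr 1; omega
    have := one_sub_pow_ne_zero hq hk
    have := one_sub_pow_ne_zero hq n.succ_ne_zero
    field_simp
    linear_combination -q ^ k * hrec - qBinom q (n + 1) k * hpow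

noncomputable def dilcherSum (q : ℂ) (m n : ℕ) (x : ℂ) : ℂ :=
  ∑ k ∈ Icc 1 n, (-1) ^ (k - 1) * qBinom q n k * q ^ k.choose 2 * x ^ k / (1 - q ^ k) ^ m

lemma dilcherSum_zero (hq : ¬IsOfFinOrder q) (n : ℕ) (x : ℂ) :
    dilcherSum q 0 n x = 1 - qPoch x q n := by
  rw [← sum_qBinom_mul_eq_qPoch hq, range_eq_Ico, sum_eq_sum_Ico_succ_bot n.succ_pos,
    Nat.succ_eq_add_one, zero_add, Ico_add_one_right_eq_Icc, pow_zero, qBinom_zero_right hq,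
    Nat.choose_zero_succ, pow_zero, pow_zero, one_mul, one_mul, one_mul, sub_add_cancel_left,
    dilcherSum, ← sum_neg_distrib]
  refine sum_congr rfl fun k hk => ?_
  obtain ⟨k, rfl⟩ := Nat.exists_eq_add_of_le' (mem_Icc.mp hk).1
  rw [Nat.add_sub_cancel, pow_zero, div_one, pow_succ]
  ring

lemma dilcherSum_succ (hq : ¬IsOfFinOrder q) (m n : ℕ) (x : ℂ) :
    dilcherSum q (m + 1) n x = dilcherSum q (m + 1) n (q * x) + dilcherSum q m n x := by
  rw [dilcherSum, dilcherSum, dilcherSum, ← sum_add_distrib]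
  refine sum_congr rfl fun k hk => ?_
  have := one_sub_pow_ne_zero hq (Nat.one_le_iff_ne_zero.mp (mem_Icc.mp hk).1)
  field_simp
  ring

lemma dilcherSum_pow_self (hq : ¬IsOfFinOrder q) (m : ℕ) {n : ℕ} (hn : n ≠ 0) :
    dilcherSum q m n (q ^ m) = hSym q n m := by
  induction m generalizing n with
  | zero =>
    rw [dilcherSum_zero hq, pow_zero, qPoch_eq_zero (r := 0) (Nat.pos_of_ne_zero hn) (by simp),
      sub_zero, hSym_zero]
  | succ m ih =>
    set c : ℕ → ℂ := fun k => (-1) ^ (k - 1) * q ^ k.choose 2 * (q ^ m) ^ k / (1 - q ^ k) ^ m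
    have hc (l : ℕ) : dilcherSum q m l (q ^ m) = ∑ k ∈ Icc 1 l, c k * qBinom q l k :=
      sum_congr rfl fun _ _ => by ring
    calc dilcherSum q (m + 1) n (q ^ (m + 1))
        = ∑ k ∈ Icc 1 n, c k * (qBinom q n k * (q ^ k / (1 - q ^ k))) := by
          refine sum_congr rfl fun k hk => ?_
          have := one_sub_pow_ne_zero hq (Nat.one_le_iff_ne_zero.mp (mem_Icc.mp hk).1)
          simp only [c]
          field_simp
          ring
      _ = ∑ k ∈ Icc 1 n, ∑ l ∈ Icc k n, c k * (qBinom q l k * (q ^ l / (1 - q ^ l))) := by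
          refine sum_congr rfl fun k hk => ?_
          obtain ⟨hk1, hkn⟩ := mem_Icc.mp hk
          rw [← mul_sum, sum_Icc_qBinom_mul hq (Nat.one_le_iff_ne_zero.mp hk1) hkn]
      _ = ∑ l ∈ Icc 1 n, q ^ l / (1 - q ^ l) * ∑ k ∈ Icc 1 l, c k * qBinom q l k := by
          rw [sum_comm' (t' := Icc 1 n) (s' := Icc 1) (by intro k l; simp only [mem_Icc]; omega)]
          refine sum_congr rfl fun l _ => ?_
          rw [mul_sum]
          exact sum_congr rfl fun _ _ => by ring
      _ = hSym q n (m + 1) := by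
          rw [hSym_succ]
          refine sum_congr rfl fun l hl => ?_
          rw [← hc, ih (Nat.one_le_iff_ne_zero.mp (mem_Icc.mp hl).1)]

lemma dilcherSum_zpow_sub (hq₀ : q ≠ 0) (hq : ¬IsOfFinOrder q) {n r m : ℕ} (hn : n ≠ 0)
    (hr : r ≤ m + n - 1) :
    dilcherSum q m n (q ^ ((m : ℤ) - r)) =
      ∑ j ∈ range (m + 1), (r.choose (m - j) : ℂ) * hSym q n j := by
  induction r generalizing m with
  | zero =>
    rw [Nat.cast_zero, sub_zero, zpow_natCast, dilcherSum_pow_self hq m hn, sum_range_succ,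
      Nat.sub_self, Nat.choose_zero_right, Nat.cast_one, one_mul, right_eq_add]
    exact sum_eq_zero fun j hj => by
      rw [Nat.choose_eq_zero_of_lt (by have := mem_range.mp hj; omega), Nat.cast_zero, zero_mul]
  | succ r ih =>
    rcases m with _ | m
    · rw [dilcherSum_zero hq, qPoch_eq_zero (r := r + 1) (by omega), zero_add, sum_range_one,
        Nat.choose_zero_right, hSym_zero]
      · simp
      · rw [← zpow_natCast, ← zpow_add₀ hq₀]; simp
    · have hx : q * q ^ ((m : ℤ) - r) = q ^ (((m + 1 : ℕ) : ℤ) - r) := by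
        rw [← zpow_one_add₀ hq₀]; push_cast; ring_nf
      rw [show ((m + 1 : ℕ) : ℤ) - (r + 1 : ℕ) = (m : ℤ) - r by push_cast; ring, dilcherSum_succ hq,
        hx, ih (by omega), ih (by omega), sum_range_choose_succ_mul]

end Dilcher

theorem stmt9_general (m n r : ℕ) (hn : 1 ≤ n) (hr : r ≤ m + n - 1)
    (q : ℂ) (hq : q ≠ 0) (hq1 : ∀ j, 1 ≤ j → q ^ j ≠ 1) :
    ∑ k ∈ Finset.Icc 1 n,
        (-1 : ℂ) ^ (k - 1) * qBinom q n k *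
          q ^ (((k * (k - 1) / 2 : ℕ) : ℤ) + (k : ℤ) * ((m : ℤ) - r)) / (1 - q ^ k) ^ m
      = ∑ j ∈ Finset.range (m + 1), (r.choose (m - j) : ℂ) * hSym q n j := by
  have hq' : ¬IsOfFinOrder q := fun h =>
    let ⟨j, hj, hqj⟩ := isOfFinOrder_iff_pow_eq_one.mp h
    hq1 j hj hqj
  rw [← dilcherSum_zpow_sub hq hq' (Nat.one_le_iff_ne_zero.mp hn) hr]
  refine sum_congr rfl fun k _ => ?_
  rw [← Nat.choose_two_right, zpow_add₀ hq, zpow_natCast, ← zpow_natCast (q ^ _) k, ← zpow_mul,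
    mul_comm (k : ℤ), ← mul_assoc]

/-- Generalized Dilcher identity. -/
theorem stmt9 (m n r : ℕ) (hm : 1 ≤ m) (hn : 1 ≤ n) (hr : r ≤ m + n - 1)
    (q : ℂ) (hq : q ≠ 0) (hq1 : ∀ j, 1 ≤ j → q ^ j ≠ 1) :
    ∑ k ∈ Finset.Icc 1 n,
        (-1 : ℂ) ^ (k - 1) * qBinom q n k *
          q ^ (((k * (k - 1) / 2 : ℕ) : ℤ) + (k : ℤ) * ((m : ℤ) - r)) / (1 - q ^ k) ^ m
      = ∑ j ∈ Finset.range (m + 1), (r.choose (m - j) : ℂ) * hSym q n j :=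
  stmt9_general m n r hn hr q hq hq1
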